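/- arXiv:2603.00286 — 6 statements merged into one kernel-verified Lean document; each statement's English description precedes it below -/
import Mathlib

section
/- Let E ⊂ ℝ^m be a convex set and suppose E contains the scaled cube 2kQ × {0} (where Q = [-1/2,1/2]ⁿ sits in the first n coordinates, n ≤ m) for some k > 0. Set ε = 1/(2k). Then E + (Q × {0}) ⊆ (1 + ε)E, and if additionally k > 1/2, then (1 - ε)E ⊆ E ⊖ (Q × {0}). -/
open MeasureTheory Set
open scoped ENNReal Pointwise

/-- The cube `Q = [-1/2, 1/2]^n` in `ℝⁿ`. -/
def cube (n : ℕ) : Set (Fin n → ℝ) := {q | ∀ i, |q i| ≤ 1/2}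

/-! Both containments come from `(p + q) • E = p • E + q • E` for convex `E` and `p, q ≥ 0`:
the hypothesis says `Q × {0} ⊆ ε • E`, so `E + Q × {0} ⊆ E + ε • E = (1 + ε) • E` and
`(1 - ε) • E + Q × {0} ⊆ (1 - ε) • E + ε • E = E`. -/

section ConvexDilation

variable {𝕜 V : Type*} [Field 𝕜] [LinearOrder 𝕜] [IsStrictOrderedRing 𝕜]
  [AddCommGroup V] [Module 𝕜 V] {E A : Set V} {ε : 𝕜}

theorem Convex.add_subset_one_add_smul (hE : Convex 𝕜 E) (hε : 0 ≤ ε) (hA : A ⊆ ε • E) :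
    E + A ⊆ (1 + ε) • E := by
  rw [hE.add_smul zero_le_one hε, one_smul]
  exact add_subset_add_left hA

theorem Convex.one_sub_smul_add_subset (hE : Convex 𝕜 E) (hε₀ : 0 ≤ ε) (hε₁ : ε ≤ 1)
    (hA : A ⊆ ε • E) : (1 - ε) • E + A ⊆ E := by
  calc (1 - ε) • E + A ⊆ (1 - ε) • E + ε • E := add_subset_add_left hA
    _ = E := by rw [← hE.add_smul (sub_nonneg.2 hε₁) hε₀, sub_add_cancel, one_smul]

end ConvexDilation

theorem cube_prod_zero_subset_smul {n d : ℕ} {E : Set ((Fin n → ℝ) × (Fin d → ℝ))} {t : ℝ}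
    (ht : t ≠ 0) (hbox : ∀ q ∈ cube n, ((t • q : Fin n → ℝ), (0 : Fin d → ℝ)) ∈ E) :
    cube n ×ˢ ({0} : Set (Fin d → ℝ)) ⊆ t⁻¹ • E := by
  rintro ⟨q, z⟩ ⟨hq, rfl : z = 0⟩
  rw [mem_inv_smul_set_iff₀ ht, Prod.smul_mk, smul_zero]
  exact hbox q hq

/-- Dilation containments for Minkowski thickening and erosion of a convex set containing
`2kQ × {0}`. -/
theorem dilation_containments (n d : ℕ) (E : Set ((Fin n → ℝ) × (Fin d → ℝ)))
    (hE : Convex ℝ E) (k : ℝ) (hk : 0 < k)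
    (hbox : ∀ q ∈ cube n, (((2 * k) • q : Fin n → ℝ), (0 : Fin d → ℝ)) ∈ E) :
    E + (cube n ×ˢ ({0} : Set (Fin d → ℝ))) ⊆ (1 + 1 / (2 * k)) • E ∧
    (1 / 2 < k →
      (1 - 1 / (2 * k)) • E ⊆
        {y | ∀ q ∈ cube n, y + (q, (0 : Fin d → ℝ)) ∈ E}) := by
  have hQ : cube n ×ˢ ({0} : Set (Fin d → ℝ)) ⊆ (1 / (2 * k)) • E := by
    rw [one_div]
    exact cube_prod_zero_subset_smul (by positivity) hbox
  refine ⟨hE.add_subset_one_add_smul (by positivity) hQ, fun hk' y hy q hq => ?_⟩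
  have hε₁ : 1 / (2 * k) ≤ 1 := by rw [div_le_one (by positivity)]; linarith
  exact hE.one_sub_smul_add_subset (by positivity) hε₁ hQ
    (add_mem_add hy ⟨hq, mem_singleton 0⟩)
end

section
/- Let D ⊂ ℝ^{n+d} be a convex body, S_D = D ∩ (ℤⁿ × ℝ^d), and K_D = proj_{ℝⁿ}(D). Suppose there exist z_D ∈ ℝⁿ and k > 1/2 with z_D + k·B∞ⁿ ⊆ K_D, where B∞ⁿ is the unit ℓ∞ ball. Then (1 - 1/(2k))^{n+d} · vol_{n+d}(D) ≤ H_d(S_D) ≤ (1 + 1/(2k))^{n+d} · vol_{n+d}(D). -/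
open MeasureTheory Set Metric
open scoped ENNReal Pointwise

/-- The mixed-integer volume `H_d(A) = Σ_{z ∈ ℤⁿ} vol_d(A_z)`. -/
noncomputable def mixVol (n d : ℕ) (A : Set ((Fin n → ℝ) × (Fin d → ℝ))) : ℝ≥0∞ :=
  ∑' z : Fin n → ℤ, volume {x : Fin d → ℝ | ((fun i => (z i : ℝ)), x) ∈ A}

/-- The mixed-integer lattice `ℤⁿ × ℝ^d` as a subset of `ℝⁿ × ℝ^d`. -/
def mixLattice (n d : ℕ) : Set ((Fin n → ℝ) × (Fin d → ℝ)) :=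
  {p | ∃ z : Fin n → ℤ, p.1 = fun i => (z i : ℝ)}

/-!
Write `f(u)` for the `d`-volume of the fibre of `D` over `u ∈ ℝⁿ`, so that `vol D = ∫ f` and
`H_d(S_D) = ∑_{z ∈ ℤⁿ} f(z)`. By convexity the fibre over `(1 - σ) x + σ w`, for `w ∈ K_D`,
contains a copy of the fibre over `x` scaled by `1 - σ`, so `f((1 - σ) x + σ w) ≥ (1 - σ)^d f(x)`.
Put `t = 1/(2k)`. A point `u` of the unit cell around `z ∈ ℤⁿ` has `‖u - z‖∞ ≤ 1/2 = t k`,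
so `w = z_D ± (u - z)/t ∈ z_D + k B∞ⁿ ⊆ K_D`. This writes `z` as `(1 - t) x + t w` with
`x = (u - t z_D)/(1 - t)`, and `(u + t z_D)/(1 + t)` as `(1 - σ) z + σ w` with `σ = t/(1 + t)`.
Integrating these pointwise bounds over the cells and undoing the dilations by `1 ∓ t` in `ℝⁿ`
gives the factors `(1 ∓ t)^(n + d)`.
-/

open Module

section Fibres

variable {E F : Type*} [NormedAddCommGroup F] [NormedSpace ℝ F] [MeasurableSpace F]
  [BorelSpace F] [FiniteDimensional ℝ F] (μ : Measure F) [μ.IsAddHaarMeasure]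

theorem Convex.ofReal_pow_finrank_mul_measure_slice_le [AddCommGroup E] [Module ℝ E]
    {D : Set (E × F)} (hD : Convex ℝ D) {σ : ℝ}
    (hσ₀ : 0 ≤ σ) (hσ₁ : σ ≤ 1) (x : E) {w : E} (hw : w ∈ Prod.fst '' D) :
    ENNReal.ofReal ((1 - σ) ^ finrank ℝ F) * μ (Prod.mk x ⁻¹' D) ≤
      μ (Prod.mk ((1 - σ) • x + σ • w) ⁻¹' D) := by
  obtain ⟨⟨w, y⟩, hwy, rfl⟩ := hw
  have hscale : μ (AffineMap.homothety y (1 - σ) '' (Prod.mk x ⁻¹' D)) =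
      ENNReal.ofReal ((1 - σ) ^ finrank ℝ F) * μ (Prod.mk x ⁻¹' D) := by
    rw [Measure.addHaar_image_homothety, abs_pow, abs_of_nonneg (sub_nonneg.2 hσ₁)]
  rw [← hscale]
  refine measure_mono ?_
  rintro _ ⟨v, hv, rfl⟩
  have hmem := hD hv hwy (sub_nonneg.2 hσ₁) hσ₀ (sub_add_cancel 1 σ)
  simp only [Prod.smul_mk, Prod.mk_add_mk] at hmem
  have hv' : AffineMap.homothety y (1 - σ) v = (1 - σ) • v + σ • y := by
    rw [AffineMap.homothety_apply, vsub_eq_sub, vadd_eq_add]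
    module
  rwa [mem_preimage, hv']

variable {μ} [NormedAddCommGroup E] [NormedSpace ℝ E] {D : Set (E × F)}

theorem Convex.ofReal_pow_finrank_mul_measure_slice_le_of_dist_le (hD : Convex ℝ D)
    {c : E} {k t : ℝ} (hK : closedBall c k ⊆ Prod.fst '' D) (ht₀ : 0 < t) (ht₁ : t < 1)
    {u z : E} (huz : dist u z ≤ t * k) :
    ENNReal.ofReal ((1 - t) ^ finrank ℝ F) * μ (Prod.mk ((1 - t)⁻¹ • (u - t • c)) ⁻¹' D) ≤
      μ (Prod.mk z ⁻¹' D) := by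
  have hw : c + t⁻¹ • (z - u) ∈ closedBall c k := by
    rwa [mem_closedBall, dist_self_add_left, norm_smul, norm_inv, Real.norm_of_nonneg ht₀.le,
      ← dist_eq_norm, dist_comm, inv_mul_le_iff₀ ht₀]
  have hpoint : (1 - t) • ((1 - t)⁻¹ • (u - t • c)) + t • (c + t⁻¹ • (z - u)) = z := by
    rw [smul_inv_smul₀ (sub_ne_zero.2 ht₁.ne'), smul_add, smul_inv_smul₀ ht₀.ne']
    abel
  have hcontract := hD.ofReal_pow_finrank_mul_measure_slice_le μ ht₀.le ht₁.le
    ((1 - t)⁻¹ • (u - t • c)) (hK hw)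
  rwa [hpoint] at hcontract

theorem Convex.measure_slice_le_ofReal_pow_finrank_mul_of_dist_le (hD : Convex ℝ D)
    {c : E} {k t : ℝ} (hK : closedBall c k ⊆ Prod.fst '' D) (ht : 0 < t)
    {u z : E} (huz : dist u z ≤ t * k) :
    μ (Prod.mk z ⁻¹' D) ≤
      ENNReal.ofReal ((1 + t) ^ finrank ℝ F) * μ (Prod.mk ((1 + t)⁻¹ • (u + t • c)) ⁻¹' D) := by
  have hw : c + t⁻¹ • (u - z) ∈ closedBall c k := by
    rwa [mem_closedBall, dist_self_add_left, norm_smul, norm_inv, Real.norm_of_nonneg ht.le,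
      ← dist_eq_norm, inv_mul_le_iff₀ ht]
  have h1t : 0 < 1 + t := by linarith
  have hσ : 1 - t / (1 + t) = (1 + t)⁻¹ := by field_simp; ring
  have hcontract := hD.ofReal_pow_finrank_mul_measure_slice_le μ (σ := t / (1 + t))
    (by positivity) (div_le_one_of_le₀ (by linarith) h1t.le) z (hK hw)
  have hpoint : (1 - t / (1 + t)) • z + (t / (1 + t)) • (c + t⁻¹ • (u - z)) =
      (1 + t)⁻¹ • (u + t • c) := by
    rw [hσ, div_eq_inv_mul, mul_smul, smul_add, smul_inv_smul₀ ht.ne', ← smul_add]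
    congr 1
    abel
  rwa [hpoint, hσ, inv_pow, ENNReal.ofReal_inv_of_pos (by positivity),
    ENNReal.inv_mul_le_iff (ENNReal.ofReal_pos.2 (by positivity)).ne'
      ENNReal.ofReal_ne_top] at hcontract

end Fibres

section ChangeOfVariables

variable {E : Type*} [NormedAddCommGroup E] [NormedSpace ℝ E] [MeasurableSpace E] [BorelSpace E]
  [FiniteDimensional ℝ E] (μ : Measure E) [μ.IsAddHaarMeasure]

theorem lintegral_comp_inv_smul_add (f : E → ℝ≥0∞) {c : ℝ} (hc : 0 < c) (b : E) :
    ∫⁻ x, f (c⁻¹ • (x + b)) ∂μ = ENNReal.ofReal (c ^ finrank ℝ E) * ∫⁻ x, f x ∂μ := by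
  have hc' : c⁻¹ ≠ 0 := inv_ne_zero hc.ne'
  calc ∫⁻ x, f (c⁻¹ • (x + b)) ∂μ = ∫⁻ x, f (c⁻¹ • x) ∂μ :=
        lintegral_add_right_eq_self (fun x => f (c⁻¹ • x)) b
    _ = ∫⁻ x, f x ∂(Measure.map (c⁻¹ • ·) μ) :=
        (lintegral_map_equiv f (Homeomorph.smulOfNeZero c⁻¹ hc').toMeasurableEquiv).symm
    _ = ENNReal.ofReal (c ^ finrank ℝ E) * ∫⁻ x, f x ∂μ := by
        rw [Measure.map_addHaar_smul μ hc', lintegral_smul_measure, inv_pow, inv_inv,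
          abs_of_pos (by positivity), smul_eq_mul]

end ChangeOfVariables

section IntCell

variable {n : ℕ}

def intCell (z : Fin n → ℤ) : Set (Fin n → ℝ) :=
  univ.pi fun i => Ico ((z i : ℝ) - 1 / 2) (z i + 1 / 2)

theorem mem_intCell_iff {z : Fin n → ℤ} {u : Fin n → ℝ} :
    u ∈ intCell z ↔ (fun i => round (u i)) = z := by
  simp only [intCell, mem_univ_pi, mem_Ico, funext_iff, round_eq, Int.floor_eq_iff]
  refine forall_congr' fun i => ?_
  constructor <;> rintro ⟨h₁, h₂⟩ <;> constructor <;> linarith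

theorem measurableSet_intCell (z : Fin n → ℤ) : MeasurableSet (intCell z) :=
  .univ_pi fun _ => measurableSet_Ico

theorem volume_intCell (z : Fin n → ℤ) : volume (intCell z) = 1 := by
  norm_num [intCell, Real.volume_pi_Ico]

theorem dist_le_of_mem_intCell {z : Fin n → ℤ} {u : Fin n → ℝ} (hu : u ∈ intCell z) :
    dist u (fun i => (z i : ℝ)) ≤ 1 / 2 := by
  refine (dist_pi_le_iff (by norm_num)).2 fun i => ?_
  obtain ⟨h₁, h₂⟩ := hu i (mem_univ i)
  rw [Real.dist_eq, abs_le]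
  constructor <;> linarith

theorem lintegral_eq_tsum_setLIntegral_intCell (G : (Fin n → ℝ) → ℝ≥0∞) :
    ∫⁻ u, G u = ∑' z, ∫⁻ u in intCell z, G u := by
  have hcover : (⋃ z : Fin n → ℤ, intCell z) = univ :=
    eq_univ_of_forall fun u => mem_iUnion.2 ⟨_, mem_intCell_iff.2 rfl⟩
  have hdisj : Pairwise (Function.onFun Disjoint (intCell (n := n))) := fun z z' hne =>
    disjoint_left.2 fun u hu hu' =>
      hne ((mem_intCell_iff.1 hu).symm.trans (mem_intCell_iff.1 hu'))
  rw [← setLIntegral_univ, ← hcover, lintegral_iUnion measurableSet_intCell hdisj]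

theorem lintegral_le_tsum_of_forall_mem_intCell {G : (Fin n → ℝ) → ℝ≥0∞}
    {a : (Fin n → ℤ) → ℝ≥0∞} (h : ∀ z, ∀ u ∈ intCell z, G u ≤ a z) :
    ∫⁻ u, G u ≤ ∑' z, a z := by
  rw [lintegral_eq_tsum_setLIntegral_intCell]
  refine ENNReal.tsum_le_tsum fun z => ?_
  calc ∫⁻ u in intCell z, G u ≤ ∫⁻ _ in intCell z, a z :=
        setLIntegral_mono' (measurableSet_intCell z) (h z)
    _ = a z := by rw [setLIntegral_const, volume_intCell, mul_one]

theorem tsum_le_lintegral_of_forall_mem_intCell {G : (Fin n → ℝ) → ℝ≥0∞}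
    {a : (Fin n → ℤ) → ℝ≥0∞} (h : ∀ z, ∀ u ∈ intCell z, a z ≤ G u) :
    ∑' z, a z ≤ ∫⁻ u, G u := by
  rw [lintegral_eq_tsum_setLIntegral_intCell]
  refine ENNReal.tsum_le_tsum fun z => ?_
  calc a z = ∫⁻ _ in intCell z, a z := by rw [setLIntegral_const, volume_intCell, mul_one]
    _ ≤ ∫⁻ u in intCell z, G u := setLIntegral_mono' (measurableSet_intCell z) (h z)

end IntCell

section Comparison

variable {n : ℕ} {F : Type*} [NormedAddCommGroup F] [NormedSpace ℝ F] [MeasurableSpace F]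
  [BorelSpace F] [FiniteDimensional ℝ F] {μ : Measure F} [μ.IsAddHaarMeasure]
  {D : Set ((Fin n → ℝ) × F)} {c : Fin n → ℝ} {k : ℝ}

theorem Convex.ofReal_pow_mul_measure_le_tsum_measure_slice (hconv : Convex ℝ D)
    (hD : MeasurableSet D) (hk : 1 / 2 < k) (hK : closedBall c k ⊆ Prod.fst '' D) :
    ENNReal.ofReal ((1 - 1 / (2 * k)) ^ (n + finrank ℝ F)) * (volume.prod μ) D ≤
      ∑' z : Fin n → ℤ, μ (Prod.mk (fun i => (z i : ℝ)) ⁻¹' D) := by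
  have htk : 1 / (2 * k) * k = 1 / 2 := by field_simp
  set t := 1 / (2 * k)
  have ht₀ : 0 < t := by positivity
  have ht₁ : t < 1 := by rw [div_lt_one (by linarith)]; linarith
  rw [Measure.prod_apply hD]
  calc ENNReal.ofReal ((1 - t) ^ (n + finrank ℝ F)) * ∫⁻ u, μ (Prod.mk u ⁻¹' D)
      = ENNReal.ofReal ((1 - t) ^ finrank ℝ F) *
          ∫⁻ u, μ (Prod.mk ((1 - t)⁻¹ • (u - t • c)) ⁻¹' D) := by
        simp_rw [sub_eq_add_neg _ (t • c)]
        rw [lintegral_comp_inv_smul_add volume (fun v => μ (Prod.mk v ⁻¹' D)) (sub_pos.2 ht₁),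
          finrank_fin_fun, ← mul_assoc, ← ENNReal.ofReal_mul (by positivity), ← pow_add, add_comm n]
    _ ≤ ∫⁻ u, ENNReal.ofReal ((1 - t) ^ finrank ℝ F) *
          μ (Prod.mk ((1 - t)⁻¹ • (u - t • c)) ⁻¹' D) := lintegral_const_mul_le _ _
    _ ≤ ∑' z : Fin n → ℤ, μ (Prod.mk (fun i => (z i : ℝ)) ⁻¹' D) :=
        lintegral_le_tsum_of_forall_mem_intCell fun z u hu =>
          hconv.ofReal_pow_finrank_mul_measure_slice_le_of_dist_le hK ht₀ ht₁
            (htk ▸ dist_le_of_mem_intCell hu)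

theorem Convex.tsum_measure_slice_le_ofReal_pow_mul_measure (hconv : Convex ℝ D)
    (hD : MeasurableSet D) (hk : 1 / 2 < k) (hK : closedBall c k ⊆ Prod.fst '' D) :
    ∑' z : Fin n → ℤ, μ (Prod.mk (fun i => (z i : ℝ)) ⁻¹' D) ≤
      ENNReal.ofReal ((1 + 1 / (2 * k)) ^ (n + finrank ℝ F)) * (volume.prod μ) D := by
  have htk : 1 / (2 * k) * k = 1 / 2 := by field_simp
  set t := 1 / (2 * k)
  have ht : 0 < t := by positivity
  rw [Measure.prod_apply hD]
  calc ∑' z : Fin n → ℤ, μ (Prod.mk (fun i => (z i : ℝ)) ⁻¹' D)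
      ≤ ∫⁻ u, ENNReal.ofReal ((1 + t) ^ finrank ℝ F) *
          μ (Prod.mk ((1 + t)⁻¹ • (u + t • c)) ⁻¹' D) :=
        tsum_le_lintegral_of_forall_mem_intCell fun z u hu =>
          hconv.measure_slice_le_ofReal_pow_finrank_mul_of_dist_le hK ht
            (htk ▸ dist_le_of_mem_intCell hu)
    _ = ENNReal.ofReal ((1 + t) ^ finrank ℝ F) *
          ∫⁻ u, μ (Prod.mk ((1 + t)⁻¹ • (u + t • c)) ⁻¹' D) :=
        lintegral_const_mul' _ _ ENNReal.ofReal_ne_top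
    _ = ENNReal.ofReal ((1 + t) ^ (n + finrank ℝ F)) * ∫⁻ u, μ (Prod.mk u ⁻¹' D) := by
        rw [lintegral_comp_inv_smul_add volume (fun v => μ (Prod.mk v ⁻¹' D)) (by positivity),
          finrank_fin_fun, ← mul_assoc, ← ENNReal.ofReal_mul (by positivity), ← pow_add,
          add_comm (finrank ℝ F)]

end Comparison

theorem mixVol_inter_mixLattice (n d : ℕ) (D : Set ((Fin n → ℝ) × (Fin d → ℝ))) :
    mixVol n d (D ∩ mixLattice n d) =
      ∑' z : Fin n → ℤ, volume (Prod.mk (fun i => (z i : ℝ)) ⁻¹' D) := by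
  refine tsum_congr fun z => congrArg volume (ext fun x => ?_)
  exact and_iff_left ⟨z, rfl⟩

theorem comparison_inequality_general (n d : ℕ) (D : Set ((Fin n → ℝ) × (Fin d → ℝ)))
    (hconv : Convex ℝ D) (hcomp : IsCompact D)
    (z_D : Fin n → ℝ) (k : ℝ) (hk : 1 / 2 < k)
    (hbox : closedBall z_D k ⊆ Prod.fst '' D) :
    ENNReal.ofReal ((1 - 1 / (2 * k)) ^ (n + d)) * volume D ≤
      mixVol n d (D ∩ mixLattice n d) ∧
    mixVol n d (D ∩ mixLattice n d) ≤
      ENNReal.ofReal ((1 + 1 / (2 * k)) ^ (n + d)) * volume D := by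
  have hD := hcomp.measurableSet
  have hlower := hconv.ofReal_pow_mul_measure_le_tsum_measure_slice (μ := volume) hD hk hbox
  have hupper := hconv.tsum_measure_slice_le_ofReal_pow_mul_measure (μ := volume) hD hk hbox
  rw [finrank_fin_fun, ← Measure.volume_eq_prod, ← mixVol_inter_mixLattice] at hlower hupper
  exact ⟨hlower, hupper⟩

/-- Comparison inequality between mixed-integer volume and Lebesgue volume.
`ℝⁿ = Fin n → ℝ` carries the sup norm, so `closedBall z_D k` is `z_D + k·B∞ⁿ`. -/
theorem comparison_inequality (n d : ℕ) (D : Set ((Fin n → ℝ) × (Fin d → ℝ)))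
    (hconv : Convex ℝ D) (hcomp : IsCompact D) (hint : (interior D).Nonempty)
    (z_D : Fin n → ℝ) (k : ℝ) (hk : 1 / 2 < k)
    (hbox : closedBall z_D k ⊆ Prod.fst '' D) :
    ENNReal.ofReal ((1 - 1 / (2 * k)) ^ (n + d)) * volume D ≤
      mixVol n d (D ∩ mixLattice n d) ∧
    mixVol n d (D ∩ mixLattice n d) ≤
      ENNReal.ofReal ((1 + 1 / (2 * k)) ^ (n + d)) * volume D :=
  comparison_inequality_general n d D hconv hcomp z_D k hk hbox
end

section
/- Let C ⊂ ℝ^{n+d} be a convex body with K = proj_{ℝⁿ}(C) containing z₀ + k·B∞ⁿ for some z₀ ∈ ℝⁿ and k > 1/2. Set ε = 1/(2k). Then there exists w* ∈ C such that C' := (1-ε)C + εw* satisfies: (1) C' ⊆ C and vol_{n+d}(C') = (1-ε)^{n+d} vol_{n+d}(C); (2) the projection to ℝⁿ of the centroid of C' is an integer vector; (3) proj_{ℝⁿ}(C') contains a translate of (k - 1/2)·B∞ⁿ. -/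
open MeasureTheory Set Metric
open scoped ENNReal Pointwise

noncomputable def centroid {E : Type*} [NormedAddCommGroup E] [NormedSpace ℝ E]
    [MeasureSpace E] (D : Set E) : E :=
  (volume D).toReal⁻¹ • ∫ y in D, y

/-!
Shrinking `C` by the homothety of ratio `1 - ε` centred at `w ∈ C` keeps it inside `C`, scales
its volume by `(1 - ε)^(n+d)`, and moves its centroid `c` to `(1 - ε) c + ε w`. As `w` ranges
over `C`, the `ℝⁿ`-part `(1 - ε) c₁ + ε w₁` of the new centroid therefore sweeps the sup-norm
ball of radius `ε k = 1/2` around `(1 - ε) c₁ + ε z₀`, which contains an integer point. The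
projection of the shrunken body contains the image of `z₀ + k B∞ⁿ`, a ball of radius
`(1 - ε) k = k - 1/2`.
-/

open AffineMap Module

section Homothety

theorem homothety_apply_eq_smul_add {k V : Type*} [CommRing k] [AddCommGroup V] [Module k V]
    (c y : V) (r : k) : homothety c r y = r • y + (1 - r) • c := by
  rw [homothety_eq_lineMap, lineMap_apply_module, add_comm]

theorem homothety_one_sub {k V P : Type*} [CommRing k] [AddCommGroup V] [Module k V]
    [AddTorsor V P] (c y : P) (r : k) : homothety c (1 - r) y = homothety y r c := by
  rw [homothety_eq_lineMap, homothety_eq_lineMap, lineMap_apply_one_sub]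

theorem fst_homothety {k E F : Type*} [CommRing k] [AddCommGroup E] [Module k E]
    [AddCommGroup F] [Module k F] (c y : E × F) (r : k) :
    (homothety c r y).1 = homothety c.1 r y.1 := by
  simp [homothety_apply]

theorem image_fst_homothety_image {k E F : Type*} [CommRing k] [AddCommGroup E] [Module k E]
    [AddCommGroup F] [Module k F] (c : E × F) (r : k) (C : Set (E × F)) :
    Prod.fst '' (homothety c r '' C) = homothety c.1 r '' (Prod.fst '' C) := by
  simp only [image_image, fst_homothety]

theorem Convex.homothety_image_subset {𝕜 E : Type*} [CommRing 𝕜] [PartialOrder 𝕜]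
    [IsOrderedRing 𝕜] [AddCommGroup E] [Module 𝕜 E] {C : Set E} (hC : Convex 𝕜 C) {c : E}
    (hc : c ∈ C) {r : 𝕜} (hr : r ∈ Icc (0 : 𝕜) 1) : homothety c r '' C ⊆ C := by
  rintro _ ⟨y, hy, rfl⟩
  rw [homothety_eq_lineMap]
  exact hC.lineMap_mem hc hy hr

variable {E : Type*} [NormedAddCommGroup E] [NormedSpace ℝ E]

theorem homothety_image_closedBall (c x : E) {r : ℝ} (hr : 0 < r) (ρ : ℝ) :
    homothety c r '' closedBall x ρ = closedBall (homothety c r x) (r * ρ) := by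
  have hdist (y : E) : dist (homothety c r y) (homothety c r x) = r * dist y x := by
    rw [dist_eq_norm, dist_eq_norm, homothety_apply_eq_smul_add, homothety_apply_eq_smul_add,
      add_sub_add_right_eq_sub, ← smul_sub, norm_smul, Real.norm_of_nonneg hr.le]
  have hinv (z : E) : homothety c r (homothety c r⁻¹ z) = z := by
    rw [← homothety_mul_apply, mul_inv_cancel₀ hr.ne', homothety_one, id_apply]
  ext z
  constructor
  · rintro ⟨y, hy, rfl⟩
    rw [mem_closedBall, hdist]
    exact mul_le_mul_of_nonneg_left hy hr.le
  · intro hz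
    refine ⟨homothety c r⁻¹ z, ?_, hinv z⟩
    rwa [mem_closedBall, ← mul_le_mul_iff_right₀ hr, ← hdist, hinv]

theorem hasFDerivAt_homothety (c x : E) (r : ℝ) :
    HasFDerivAt (homothety c r) (r • ContinuousLinearMap.id ℝ E) x := by
  rw [show ⇑(homothety c r) = fun y => r • y + (1 - r) • c from
    funext (homothety_apply_eq_smul_add c · r)]
  exact ((hasFDerivAt_id x).const_smul r).add_const _

end Homothety

section Centroid

variable {E : Type*} [NormedAddCommGroup E] [NormedSpace ℝ E] [FiniteDimensional ℝ E]
  [MeasureSpace E] [BorelSpace E] [(volume : Measure E).IsAddHaarMeasure]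

theorem setIntegral_homothety_image {F : Type*} [NormedAddCommGroup F] [NormedSpace ℝ F]
    {D : Set E} (hD : MeasurableSet D) (c : E) {r : ℝ} (hr : r ≠ 0) (g : E → F) :
    ∫ y in homothety c r '' D, g y = |r ^ finrank ℝ E| • ∫ y in D, g (homothety c r y) := by
  rw [integral_image_eq_integral_abs_det_fderiv_smul volume hD
    (fun x _ => (hasFDerivAt_homothety c x r).hasFDerivWithinAt)
    ((homothety_injective c hr).injOn), integral_smul, ContinuousLinearMap.det,
    ContinuousLinearMap.toLinearMap_smul, ContinuousLinearMap.coe_id, LinearMap.det_smul, LinearMap.det_id, mul_one]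

theorem centroid_homothety_image {D : Set E} (hD : MeasurableSet D) (hD₀ : volume D ≠ 0)
    (hD_top : volume D ≠ ∞) (hD_int : IntegrableOn id D) (c : E) {r : ℝ} (hr : r ≠ 0) :
    centroid (homothety c r '' D) = homothety c r (centroid D) := by
  have hpow : |r ^ finrank ℝ E| ≠ 0 := abs_ne_zero.2 (pow_ne_zero _ hr)
  have hvol : (volume D).toReal ≠ 0 := ENNReal.toReal_ne_zero.2 ⟨hD₀, hD_top⟩
  have haffine : ∫ y in D, homothety c r y =
      r • (∫ y in D, y) + (volume D).toReal • (1 - r) • c := by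
    simp only [homothety_apply_eq_smul_add]
    rw [integral_add (f := fun y => r • y) (hD_int.smul r) (integrableOn_const hD_top),
      integral_smul, setIntegral_const, measureReal_def]
  rw [centroid, centroid, Measure.addHaar_image_homothety, setIntegral_homothety_image hD c hr,
    haffine, ENNReal.toReal_mul, ENNReal.toReal_ofReal (abs_nonneg _),
    homothety_apply_eq_smul_add]
  match_scalars <;> field_simp

end Centroid

theorem exists_intCast_mem_closedBall_half {ι : Type*} [Fintype ι] (x : ι → ℝ) :
    ∃ z : ι → ℤ, (fun i => (z i : ℝ)) ∈ closedBall x (1 / 2) := by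
  refine ⟨fun i => round (x i), mem_closedBall.2 <| (dist_pi_le_iff (by norm_num)).2 fun i => ?_⟩
  rw [Real.dist_eq, abs_sub_comm]
  exact abs_sub_round (x i)

/-- Centroid rounding: one can shrink a convex body `C` toward a point `w* ∈ C` so that the
resulting body `C'` keeps most of the volume, has centroid with integer `ℝⁿ`-projection, and
retains a large box in its projection.  Here `ℝⁿ = Fin n → ℝ` carries the sup norm, so
`closedBall z k` is `z + k·B∞ⁿ`. -/
theorem centroid_rounding (n d : ℕ) (C : Set ((Fin n → ℝ) × (Fin d → ℝ)))
    (hconv : Convex ℝ C) (hcomp : IsCompact C) (hint : (interior C).Nonempty)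
    (z₀ : Fin n → ℝ) (k : ℝ) (hk : 1 / 2 < k)
    (hbox : closedBall z₀ k ⊆ Prod.fst '' C) :
    ∃ w ∈ C, ∃ C' : Set ((Fin n → ℝ) × (Fin d → ℝ)),
      C' = (fun y => (1 - 1 / (2 * k)) • y + (1 / (2 * k)) • w) '' C ∧
      C' ⊆ C ∧
      volume C' = ENNReal.ofReal ((1 - 1 / (2 * k)) ^ (n + d)) * volume C ∧
      (∃ zstar : Fin n → ℤ, (centroid C').1 = fun i => (zstar i : ℝ)) ∧
      (∃ c : Fin n → ℝ, closedBall c (k - 1 / 2) ⊆ Prod.fst '' C') := by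
  have : (volume : Measure ((Fin n → ℝ) × (Fin d → ℝ))).IsAddHaarMeasure :=
    Measure.prod.instIsAddHaarMeasure volume volume
  set ε := 1 / (2 * k)
  have hε : 0 < ε := by positivity
  have hεk : ε * k = 1 / 2 := by simp only [ε]; field_simp
  have hr : 0 < 1 - ε := by nlinarith
  obtain ⟨z, hz⟩ := exists_intCast_mem_closedBall_half (homothety (centroid C).1 ε z₀)
  rw [← hεk, ← homothety_image_closedBall _ _ hε] at hz
  obtain ⟨_, ⟨w, hwC, rfl⟩, hwz⟩ := image_mono hbox hz
  have hC' : (fun y => (1 - ε) • y + ε • w) = homothety w (1 - ε) :=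
    funext fun y => by rw [homothety_apply_eq_smul_add, sub_sub_cancel]
  refine ⟨w, hwC, _, hC' ▸ rfl, hconv.homothety_image_subset hwC ⟨hr.le, by linarith⟩, ?_,
    ⟨z, ?_⟩, ⟨homothety w.1 (1 - ε) z₀, ?_⟩⟩
  · rw [Measure.addHaar_image_homothety, finrank_prod, finrank_fin_fun, finrank_fin_fun,
      abs_of_pos (pow_pos hr _)]
  · rw [centroid_homothety_image hcomp.measurableSet
      (Measure.measure_pos_of_nonempty_interior _ hint).ne' hcomp.measure_lt_top.ne
      (continuousOn_id.integrableOn_compact hcomp) w hr.ne', fst_homothety, homothety_one_sub, hwz]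
  · rw [image_fst_homothety_image, show k - 1 / 2 = (1 - ε) * k by linarith,
      ← homothety_image_closedBall _ _ hr]
    exact image_mono hbox
end

section
/- Let D ⊂ ℝ^m be a convex body and let H = {y : aᵀy ≥ c} and H̄ = {y : aᵀy ≤ c} (a ≠ 0) be complementary closed halfspaces. Then there exists a translation t ∈ ℝ^m such that t + (1/2)D ⊆ D ∩ H or t + (1/2)D ⊆ D ∩ H̄. -/
open MeasureTheory Set
open scoped ENNReal Pointwise

/-- Halfspace bisection: after cutting a convex body by complementary halfspaces, one side
contains a translate of the half-scale body. -/
theorem halfspace_bisection (m : ℕ) (D : Set (Fin m → ℝ))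
    (hconv : Convex ℝ D) (hcomp : IsCompact D) (hint : (interior D).Nonempty)
    (a : Fin m → ℝ) (ha : a ≠ 0) (c : ℝ) :
    ∃ t : Fin m → ℝ,
      (fun y => t + (1 / 2 : ℝ) • y) '' D ⊆ D ∩ {y | c ≤ ∑ i, a i * y i} ∨
      (fun y => t + (1 / 2 : ℝ) • y) '' D ⊆ D ∩ {y | ∑ i, a i * y i ≤ c} := by
  have hne : D.Nonempty := hint.mono interior_subset
  set f : (Fin m → ℝ) → ℝ := fun y => ∑ i, a i * y i with hf
  have hcont : ContinuousOn f D := by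
    apply Continuous.continuousOn
    exact continuous_finset_sum _ fun i _ => (continuous_const.mul (continuous_apply i))
  obtain ⟨p, hpD, hpmax⟩ := hcomp.exists_isMaxOn hne hcont
  obtain ⟨q, hqD, hqmin⟩ := hcomp.exists_isMinOn hne hcont
  have hlin : ∀ x y : Fin m → ℝ, f ((1/2 : ℝ) • x + (1/2 : ℝ) • y)
      = (1/2) * f x + (1/2) * f y := by
    intro x y
    simp only [hf, Pi.add_apply, Pi.smul_apply, smul_eq_mul, mul_add,
      Finset.sum_add_distrib, Finset.mul_sum]
    congr 1 <;> exact Finset.sum_congr rfl fun i _ => by ring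
  have hmem : ∀ z ∈ D, ∀ y ∈ D, (1/2 : ℝ) • z + (1/2 : ℝ) • y ∈ D := by
    intro z hz y hy
    exact hconv hz hy (by norm_num) (by norm_num) (by norm_num)
  rcases le_total c ((1/2) * f p + (1/2) * f q) with h | h
  · refine ⟨(1/2 : ℝ) • p, Or.inl ?_⟩
    rintro _ ⟨y, hy, rfl⟩
    refine ⟨hmem p hpD y hy, ?_⟩
    have : f ((1/2 : ℝ) • p + (1/2 : ℝ) • y) = (1/2) * f p + (1/2) * f y := hlin p y
    simp only [Set.mem_setOf_eq]
    calc c ≤ (1/2) * f p + (1/2) * f q := h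
      _ ≤ (1/2) * f p + (1/2) * f y := by
          have h2 : f q ≤ f y := hqmin hy
          linarith
      _ = f ((1/2 : ℝ) • p + (1/2 : ℝ) • y) := (hlin p y).symm
  · refine ⟨(1/2 : ℝ) • q, Or.inr ?_⟩
    rintro _ ⟨y, hy, rfl⟩
    refine ⟨hmem q hqD y hy, ?_⟩
    simp only [Set.mem_setOf_eq]
    calc f ((1/2 : ℝ) • q + (1/2 : ℝ) • y) = (1/2) * f q + (1/2) * f y := hlin q y
      _ ≤ (1/2) * f p + (1/2) * f q := by
          have h2 : f y ≤ f p := hpmax hy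
          linarith
      _ ≤ c := h
end

section
/- Let C ⊂ ℝ^{n+d} be a convex body and S = C ∩ (ℤⁿ × ℝ^d) nonempty. Then the halfspace depth function h_S : S → [0, ∞), defined by h_S(y) = inf over closed halfspaces H containing y of H_d(S ∩ H), is upper semicontinuous on the compact set S; consequently the set of centerpoints argmax_{y ∈ S} h_S(y) is nonempty. -/
open MeasureTheory Set
open scoped ENNReal

/-- The standard bilinear pairing on `ℝⁿ × ℝ^d`. -/
def dotP (n d : ℕ) (a y : (Fin n → ℝ) × (Fin d → ℝ)) : ℝ :=
  (∑ i, a.1 i * y.1 i) + ∑ j, a.2 j * y.2 j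

/-- The mixed-integer halfspace depth of a point `y` with respect to `S`:
the infimum of `H_d(S ∩ H)` over closed halfspaces `H` containing `y`. -/
noncomputable def depth (n d : ℕ) (S : Set ((Fin n → ℝ) × (Fin d → ℝ)))
    (y : (Fin n → ℝ) × (Fin d → ℝ)) : ℝ≥0∞ :=
  ⨅ (a : (Fin n → ℝ) × (Fin d → ℝ)) (c : ℝ) (_ : a ≠ 0) (_ : c ≤ dotP n d a y),
    mixVol n d (S ∩ {u | c ≤ dotP n d a u})

open Filter Topology

lemma isClosed_mixLattice (n d : ℕ) : IsClosed (mixLattice n d) := by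
  have h : mixLattice n d
      = ⋂ i : Fin n, {p : (Fin n → ℝ) × (Fin d → ℝ) | p.1 i ∈ Set.range ((↑) : ℤ → ℝ)} := by
    ext p
    simp only [mixLattice, mem_iInter, mem_setOf_eq, Set.mem_range]
    constructor
    · rintro ⟨z, hz⟩ i; exact ⟨z i, by rw [hz]⟩
    · intro h
      choose z hz using h
      exact ⟨z, funext fun i => (hz i).symm⟩
  rw [h]
  refine isClosed_iInter fun i => ?_
  exact IsClosed.preimage ((continuous_apply i).comp continuous_fst)
    Int.isClosedEmbedding_coe_real.isClosed_range

lemma mixVol_mono {n d : ℕ} {A B : Set ((Fin n → ℝ) × (Fin d → ℝ))} (h : A ⊆ B) :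
    mixVol n d A ≤ mixVol n d B :=
  ENNReal.tsum_le_tsum fun _ => measure_mono fun _ hx => h hx

lemma continuous_dotP (n d : ℕ) (a : (Fin n → ℝ) × (Fin d → ℝ)) :
    Continuous (dotP n d a) := by
  unfold dotP
  refine Continuous.add ?_ ?_
  · exact continuous_finset_sum _ fun i _ =>
      continuous_const.mul ((continuous_apply i).comp continuous_fst)
  · exact continuous_finset_sum _ fun j _ =>
      continuous_const.mul ((continuous_apply j).comp continuous_snd)

/-- The halfspace depth function is upper semicontinuous on the compact set
`S = C ∩ (ℤⁿ × ℝ^d)`, and hence the set of centerpoints is nonempty. -/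
theorem depth_usc_and_centerpoint_exists (n d : ℕ)
    (C : Set ((Fin n → ℝ) × (Fin d → ℝ)))
    (hconv : Convex ℝ C) (hcomp : IsCompact C) (hint : (interior C).Nonempty)
    (hne : (C ∩ mixLattice n d).Nonempty) :
    UpperSemicontinuousOn (depth n d (C ∩ mixLattice n d)) (C ∩ mixLattice n d) ∧
    ∃ y ∈ C ∩ mixLattice n d, ∀ y' ∈ C ∩ mixLattice n d,
      depth n d (C ∩ mixLattice n d) y' ≤ depth n d (C ∩ mixLattice n d) y := by
  classical
  set S := C ∩ mixLattice n d with hSdef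
  have hScl : IsClosed S := hcomp.isClosed.inter (isClosed_mixLattice n d)
  have hScomp : IsCompact S := hcomp.inter_right (isClosed_mixLattice n d)
  obtain ⟨R, hRC⟩ := hcomp.isBounded.subset_closedBall 0
  set F : Finset (Fin n → ℤ) := Fintype.piFinset (fun _ => Finset.Icc (-⌈R⌉) ⌈R⌉) with hF
  have hnormC : ∀ p ∈ C, ‖p‖ ≤ R := by
    intro p hp
    simpa [Metric.mem_closedBall, dist_zero_right] using hRC hp
  have hzF : ∀ z : Fin n → ℤ, z ∉ F → ∀ x : Fin d → ℝ,
      ((fun i => (z i : ℝ)), x) ∉ C := by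
    intro z hz x hx
    apply hz
    rw [hF, Fintype.mem_piFinset]
    intro i
    have h1 : ‖((fun i => (z i : ℝ)), x)‖ ≤ R := hnormC _ hx
    have h2 : |(z i : ℝ)| ≤ R := by
      have h2' := (norm_le_pi_norm
        ((((fun i => (z i : ℝ)), x) : (Fin n → ℝ) × (Fin d → ℝ)).1) i).trans
        ((norm_fst_le (((fun i => (z i : ℝ)), x) : (Fin n → ℝ) × (Fin d → ℝ))).trans h1)
      simpa [Real.norm_eq_abs] using h2'
    rw [Finset.mem_Icc]
    constructor
    · have : -((⌈R⌉ : ℤ) : ℝ) ≤ (z i : ℝ) := by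
        have := (abs_le.mp h2).1
        have hR : R ≤ (⌈R⌉ : ℝ) := Int.le_ceil R
        linarith
      exact_mod_cast neg_le.mpr (by exact_mod_cast neg_le.mp this)
    · have : (z i : ℝ) ≤ ((⌈R⌉ : ℤ) : ℝ) := (abs_le.mp h2).2.trans (Int.le_ceil R)
      exact_mod_cast this
  -- finite-sum representation of mixVol for subsets of C
  have hmixsum : ∀ A : Set ((Fin n → ℝ) × (Fin d → ℝ)), A ⊆ C →
      mixVol n d A = ∑ z ∈ F, volume {x : Fin d → ℝ | ((fun i => (z i : ℝ)), x) ∈ A} := by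
    intro A hA
    refine tsum_eq_sum fun z hz => ?_
    have : {x : Fin d → ℝ | ((fun i => (z i : ℝ)), x) ∈ A} = ∅ := by
      ext x; simp only [mem_setOf_eq, mem_empty_iff_false, iff_false]
      exact fun hx => hzF z hz x (hA hx)
    simp [this]
  -- slices of subsets of C have finite volume
  have hslice_fin : ∀ (z : Fin n → ℤ) (A : Set ((Fin n → ℝ) × (Fin d → ℝ))), A ⊆ C →
      volume {x : Fin d → ℝ | ((fun i => (z i : ℝ)), x) ∈ A} ≠ ∞ := by
    intro z A hA
    have hsub : {x : Fin d → ℝ | ((fun i => (z i : ℝ)), x) ∈ A}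
        ⊆ Metric.closedBall (0 : Fin d → ℝ) R := by
      intro x hx
      have : ‖((fun i => (z i : ℝ)), x)‖ ≤ R := hnormC _ (hA hx)
      have := (norm_snd_le ((fun i => (z i : ℝ)), x)).trans this
      simpa [Metric.mem_closedBall, dist_zero_right] using this
    exact ((measure_mono hsub).trans_lt
      (isCompact_closedBall (0 : Fin d → ℝ) R).measure_lt_top).ne
  have hins_cont : ∀ z : Fin n → ℤ,
      Continuous (fun x : Fin d → ℝ => (((fun i => (z i : ℝ)) : Fin n → ℝ), x)) := by
    intro z
    exact continuous_const.prodMk continuous_id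
  -- upper semicontinuity
  have husc : UpperSemicontinuousOn (depth n d S) S := by
    intro y₀ hy₀ t ht
    simp only [depth, iInf_lt_iff] at ht
    obtain ⟨a, c, ha, hc, hlt⟩ := ht
    set s₀ := dotP n d a y₀ with hs₀
    have hL : mixVol n d (S ∩ {u | s₀ ≤ dotP n d a u}) < t := by
      refine lt_of_le_of_lt (mixVol_mono ?_) hlt
      exact inter_subset_inter_right _ fun u hu => le_trans hc hu
    have hsubC : ∀ c' : ℝ, S ∩ {u | c' ≤ dotP n d a u} ⊆ C :=
      fun c' => inter_subset_left.trans inter_subset_left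
    -- continuity from above
    have key : Tendsto (fun k : ℕ => mixVol n d (S ∩ {u | s₀ - 1/(k+1) ≤ dotP n d a u}))
        atTop (𝓝 (mixVol n d (S ∩ {u | s₀ ≤ dotP n d a u}))) := by
      have heq : ∀ k : ℕ, mixVol n d (S ∩ {u | s₀ - 1/(k+1) ≤ dotP n d a u})
          = ∑ z ∈ F, volume {x : Fin d → ℝ |
              ((fun i => (z i : ℝ)), x) ∈ S ∩ {u | s₀ - 1/(k+1) ≤ dotP n d a u}} :=
        fun k => hmixsum _ (hsubC _)
      rw [hmixsum _ (hsubC s₀)]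
      simp only [heq]
      refine tendsto_finset_sum _ fun z _ => ?_
      set E : ℕ → Set (Fin d → ℝ) := fun k =>
        {x | ((fun i => (z i : ℝ)), x) ∈ S ∩ {u | s₀ - 1/(k+1) ≤ dotP n d a u}} with hE
      have hanti : Antitone E := by
        intro k m hkm x hx
        have hx2 : s₀ - 1/(m+1) ≤ dotP n d a ((fun i => (z i : ℝ)), x) := hx.2
        refine ⟨hx.1, ?_⟩
        show s₀ - 1/(k+1) ≤ dotP n d a ((fun i => (z i : ℝ)), x)
        have : (1 : ℝ)/(m+1) ≤ 1/(k+1) := by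
          have hkm' : (k : ℝ) ≤ (m : ℝ) := by exact_mod_cast hkm
          gcongr
        linarith
      have hEmeas : ∀ k, NullMeasurableSet (E k) volume := by
        intro k
        refine (IsClosed.measurableSet ?_).nullMeasurableSet
        have : E k = (fun x : Fin d → ℝ => (((fun i => (z i : ℝ)) : Fin n → ℝ), x)) ⁻¹'
            (S ∩ {u | s₀ - 1/(k+1) ≤ dotP n d a u}) := rfl
        rw [this]
        exact IsClosed.preimage (hins_cont z)
          (hScl.inter (isClosed_le continuous_const (continuous_dotP n d a)))
      have hEfin : ∃ k, volume (E k) ≠ ∞ := ⟨0, hslice_fin z _ (hsubC _)⟩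
      have hEiInter : ⋂ k, E k
          = {x | ((fun i => (z i : ℝ)), x) ∈ S ∩ {u | s₀ ≤ dotP n d a u}} := by
        ext x
        simp only [mem_iInter, hE, mem_setOf_eq, mem_inter_iff]
        constructor
        · intro h
          refine ⟨(h 0).1, ?_⟩
          have htend : Tendsto (fun k : ℕ => s₀ - 1/(k+1)) atTop (𝓝 s₀) := by
            have := tendsto_const_nhds (x := s₀) (f := atTop (α := ℕ)) |>.sub
              tendsto_one_div_add_atTop_nhds_zero_nat
            simpa using this
          exact le_of_tendsto htend (Eventually.of_forall fun k => (h k).2)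
        · intro h k
          refine ⟨h.1, ?_⟩
          show s₀ - 1/(k+1) ≤ dotP n d a ((fun i => (z i : ℝ)), x)
          have h2 : s₀ ≤ dotP n d a ((fun i => (z i : ℝ)), x) := h.2
          have : (0:ℝ) < 1/(k+1) := by positivity
          linarith
      have := tendsto_measure_iInter_atTop hEmeas hanti hEfin
      rw [hEiInter] at this
      exact this
    obtain ⟨k, hk⟩ := (key.eventually_lt_const hL).exists
    have hmemV : ∀ᶠ y in 𝓝 y₀, s₀ - 1/(k+1) < dotP n d a y := by
      have hopen : IsOpen {y | s₀ - 1/(k+1) < dotP n d a y} :=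
        isOpen_lt continuous_const (continuous_dotP n d a)
      have hy₀V : y₀ ∈ {y | s₀ - 1/(k+1) < dotP n d a y} := by
        have : (0:ℝ) < 1/(k+1) := by positivity
        simp only [mem_setOf_eq, hs₀]
        linarith
      exact hopen.eventually_mem hy₀V
    refine Eventually.filter_mono nhdsWithin_le_nhds ?_
    filter_upwards [hmemV] with y hy
    have hle : depth n d S y ≤ mixVol n d (S ∩ {u | s₀ - 1/(k+1) ≤ dotP n d a u}) :=
      iInf_le_of_le a <| iInf_le_of_le (s₀ - 1/(k+1)) <|
        iInf_le_of_le ha <| iInf_le_of_le hy.le le_rfl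
    exact hle.trans_lt hk
  refine ⟨husc, ?_⟩
  -- existence of a maximizer by sequential compactness
  set f := depth n d S with hf
  set M := sSup (f '' S) with hM
  obtain ⟨u, hu_mono, hu_tendsto, hu_mem⟩ :=
    exists_seq_tendsto_sSup (hne.image f) (OrderTop.bddAbove _)
  choose x hxS hfx using fun k => hu_mem k
  obtain ⟨y, hyS, φ, hφ, hx_tendsto⟩ := hScomp.tendsto_subseq hxS
  refine ⟨y, hyS, fun y' hy' => ?_⟩
  have hMy' : f y' ≤ M := le_sSup ⟨y', hy', rfl⟩
  refine hMy'.trans ?_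
  by_contra h
  push_neg at h
  obtain ⟨t, ht1, ht2⟩ := exists_between h
  have hev := husc y hyS t ht1
  have hxw : Tendsto (x ∘ φ) atTop (𝓝[S] y) := by
    rw [tendsto_nhdsWithin_iff]
    exact ⟨hx_tendsto, Eventually.of_forall fun k => hxS (φ k)⟩
  have h2 : ∀ᶠ k in atTop, f (x (φ k)) < t := hxw.eventually hev
  have h3 : Tendsto (fun k => f (x (φ k))) atTop (𝓝 M) := by
    simp only [hfx]
    exact hu_tendsto.comp hφ.tendsto_atTop
  exact absurd ht2 (not_lt.mpr (le_of_tendsto h3 (h2.mono fun k hk => hk.le)))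
end

section
/- For every constant α > log 2 there exist constants γ_α, M_α > 0 such that for every integer k ≥ 2 and every integer m ≥ 2(1 + αk), there exist integers n, d ≥ 1 with n + d = m and a convex body C ⊂ ℝ^{n+d} whose projection to ℝⁿ contains a translate of k·B∞ⁿ, yet with S = C ∩ (ℤⁿ × ℝ^d), sup_{y ∈ S} h_S(y)/H_d(S) ≤ M_α · exp(−γ_α · m/k). One may take γ_α = min{log 2, α − log 2}/(2(α+1)) and M_α = 1 + 1/(1 − e^{−(α−log 2)}). -/
open MeasureTheory Set
open scoped ENNReal

/-!
The body lies over the cube `[0, 2k]ⁿ`, and its fibre over `u` is a box of volume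
`∏ᵢ (1 - uᵢ / (2k+1)) ^ D`, coming from `D` fibre coordinates per base coordinate. So `H_d`
restricted to `S` is a product measure on `{0, …, 2k}ⁿ` with one-dimensional weights
`w j = (1 - j / (2k+1)) ^ D`. Once `D ≥ (log 2 + ε)(2k+1)` these decay like `2⁻ʲ e^{-εj}`,
while `D ≤ 3k` keeps `w 1 ≥ 1/10`.

Through a point with integer part `z₀` take the halfspace with normal `σ`, where `σᵢ = -1` if
`z₀ᵢ = 0` and `σᵢ = 1` otherwise. By the exponential Markov inequality with rate `θ = ε/4` its
mass is at most `∏ᵢ Σⱼ exp(θ σᵢ (j - z₀ᵢ)) w j`, and every factor is at most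
`(1 - ε²/16) Σⱼ w j`: when `z₀ᵢ = 0` because `w 1` is not small, when `z₀ᵢ ≥ 1` because the
weights have mean below `1`. With `n ≈ m / D ≥ m / (7k)` base coordinates the depth is at most
`(1 - ε²/16)ⁿ H_d(S) ≤ exp(-ε² m / (112 k)) H_d(S)`.
-/

theorem ENNReal.tsum_pi_fin_prod {β : Type*} :
    ∀ {n : ℕ} (f : Fin n → β → ℝ≥0∞), ∑' z : Fin n → β, ∏ i, f i (z i) = ∏ i, ∑' b, f i b
  | 0, f => by simp
  | n + 1, f => by
    rw [← (Fin.consEquiv fun _ => β).tsum_eq, ENNReal.tsum_prod']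
    simp only [Fin.consEquiv_apply, Fin.prod_univ_succ, Fin.cons_zero, Fin.cons_succ,
      ENNReal.tsum_mul_left, ENNReal.tsum_mul_right, ENNReal.tsum_pi_fin_prod]

theorem tsum_int_eq_sum_range {M : Type*} [AddCommMonoid M] [TopologicalSpace M] {f : ℤ → M}
    {N : ℕ} (hf : ∀ a, f a ≠ 0 → 0 ≤ a ∧ a ≤ N) :
    ∑' a, f a = ∑ j ∈ Finset.range (N + 1), f j := by
  rw [tsum_eq_sum (s := (Finset.range (N + 1)).map Nat.castEmbedding), Finset.sum_map]
  · rfl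
  intro a ha
  by_contra h
  obtain ⟨h0, hN⟩ := hf a h
  exact ha (Finset.mem_map.2 ⟨a.toNat, by simp; omega, by simp [h0]⟩)

theorem Finset.prod_range_mul_div {M : Type*} [CommMonoid M] (f : ℕ → M) {D : ℕ} (hD : 0 < D) :
    ∀ n, ∏ j ∈ range (n * D), f (j / D) = ∏ i ∈ range n, f i ^ D
  | 0 => by simp
  | n + 1 => by
    rw [add_one_mul, prod_range_add, prod_range_mul_div f hD n, prod_range_succ]
    congr 1
    rw [prod_congr rfl fun x hx => ?_, prod_const, card_range]
    rw [Nat.mul_comm, Nat.mul_add_div hD, Nat.div_eq_of_lt (mem_range.1 hx), add_zero]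

theorem Fin.prod_univ_dite_div {M : Type*} [CommMonoid M] {n d D : ℕ} (hD : 0 < D)
    (hnD : n * D ≤ d) (g : Fin n → M) :
    ∏ j : Fin d, (if h : (j : ℕ) / D < n then g ⟨j / D, h⟩ else 1) = ∏ i, g i ^ D := by
  set f : ℕ → M := fun i => if h : i < n then g ⟨i, h⟩ else 1
  calc ∏ j : Fin d, f (j / D) = ∏ j ∈ Finset.range d, f (j / D) :=
        Fin.prod_univ_eq_prod_range (fun j => f (j / D)) d
    _ = ∏ j ∈ Finset.range (n * D), f (j / D) := by
        refine (Finset.prod_subset (Finset.range_subset_range.2 hnD) fun j _ hj => ?_).symm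
        simp only [Finset.mem_range, not_lt] at hj
        simp [f, Nat.le_div_iff_mul_le hD, hj]
    _ = ∏ i ∈ Finset.range n, f i ^ D := Finset.prod_range_mul_div f hD n
    _ = ∏ i, g i ^ D := by
        rw [← Fin.prod_univ_eq_prod_range (fun i => f i ^ D)]
        simp [f]

section TiltedSums

open Finset Real

theorem exp_neg_log_two : exp (-log 2) = 1 / 2 := by
  rw [exp_neg, exp_log two_pos, one_div]

theorem exp_neg_le_inv_one_add {x : ℝ} (hx : 0 ≤ x) : exp (-x) ≤ (1 + x)⁻¹ := by
  rw [exp_neg]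
  exact inv_anti₀ (by positivity) (by linarith [add_one_le_exp x])

theorem exp_sub_one_le_mul_exp (x : ℝ) : exp x - 1 ≤ x * exp x := by
  have h := mul_le_mul_of_nonneg_right (add_one_le_exp (-x)) (exp_pos x).le
  rw [← exp_add, neg_add_cancel, exp_zero] at h
  linarith

variable {ε : ℝ} {R : ℕ} {w : ℕ → ℝ}

theorem sum_range_le_two (hε : 0 ≤ ε) (hdecay : ∀ j ≤ R, w j ≤ exp (-(log 2 + ε) * j)) :
    ∑ j ∈ range (R + 1), w j ≤ 2 := by
  refine le_trans (sum_le_sum fun j hj => ?_) (sum_geometric_two_le (R + 1))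
  calc w j ≤ exp (-(log 2 + ε) * j) := hdecay j (Nat.lt_succ_iff.1 (mem_range.1 hj))
    _ ≤ exp (j * -log 2) := exp_le_exp.2 (by nlinarith [j.cast_nonneg (α := ℝ)])
    _ = (1 / 2) ^ j := by rw [exp_nat_mul, exp_neg_log_two]

theorem sum_exp_neg_mul_le (hε0 : 0 < ε) (hε : ε ≤ 1 / 10) (hR : 1 ≤ R) (hw1 : 1 / 10 ≤ w 1)
    (hnn : ∀ j ≤ R, 0 ≤ w j) (hdecay : ∀ j ≤ R, w j ≤ exp (-(log 2 + ε) * j)) :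
    ∑ j ∈ range (R + 1), exp (-(ε / 4) * j) * w j ≤
      (1 - ε ^ 2 / 16) * ∑ j ∈ range (R + 1), w j := by
  have hgain : (1 - exp (-(ε / 4))) * w 1 ≤
      ∑ j ∈ range (R + 1), (1 - exp (-(ε / 4) * j)) * w j := by
    have hterm : ∀ j ∈ range (R + 1), 0 ≤ (1 - exp (-(ε / 4) * j)) * w j := fun j hj =>
      mul_nonneg (sub_nonneg.2 (exp_le_one_iff.2 (by nlinarith [j.cast_nonneg (α := ℝ)])))
        (hnn j (Nat.lt_succ_iff.1 (mem_range.1 hj)))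
    simpa using single_le_sum hterm (mem_range.2 (Nat.lt_succ_of_le hR))
  have hθ : 1 / 10 - 1 / 10 * (1 + ε / 4)⁻¹ ≤ (1 - exp (-(ε / 4))) * w 1 := by
    nlinarith [exp_neg_le_inv_one_add (x := ε / 4) (by positivity),
      exp_le_one_iff.2 (by linarith : -(ε / 4) ≤ 0)]
  have hnum : ε ^ 2 / 16 * 2 ≤ 1 / 10 - 1 / 10 * (1 + ε / 4)⁻¹ := by
    field_simp
    nlinarith
  have hG := sum_range_le_two hε0.le hdecay
  have hsplit : ∑ j ∈ range (R + 1), exp (-(ε / 4) * j) * w j =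
      ∑ j ∈ range (R + 1), w j - ∑ j ∈ range (R + 1), (1 - exp (-(ε / 4) * j)) * w j := by
    rw [← sum_sub_distrib]
    exact sum_congr rfl fun j _ => by ring
  nlinarith

theorem exp_neg_log_two_add_le (hε0 : 0 ≤ ε) (hε : ε ≤ 1 / 10) :
    exp (-(log 2 + 3 * ε / 4)) ≤ 1 / 2 - ε / 4 := by
  have h := exp_neg_le_inv_one_add (x := 3 * ε / 4) (by positivity)
  have h' : (1 + 3 * ε / 4)⁻¹ ≤ 1 - ε / 2 := by
    rw [inv_le_iff_one_le_mul₀ (by positivity)]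
    nlinarith
  rw [neg_add, exp_add, exp_neg_log_two]
  nlinarith [exp_pos (-(3 * ε / 4))]

theorem mul_div_one_sub_sq_add_le {q : ℝ} (hε0 : 0 < ε) (hε : ε ≤ 1 / 10) (hq0 : 0 < q)
    (hq : q ≤ 1 / 2 - ε / 4) :
    ε / 8 * (q / (1 - q) ^ 2) + ε ^ 2 / 16 * 2 ≤ 1 - (1 + ε / 4)⁻¹ := by
  have hmono : q / (1 - q) ^ 2 ≤ 4 * (2 - ε) / (2 + ε) ^ 2 := by
    rw [div_le_div_iff₀ (by nlinarith) (by positivity)]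
    nlinarith [mul_nonneg (sub_nonneg.2 hq) (by nlinarith : (0 : ℝ) ≤ 1 - q * (1 / 2 - ε / 4)),
      sq_nonneg (1 - q)]
  have hfin : ε / 8 * (4 * (2 - ε) / (2 + ε) ^ 2) + ε ^ 2 / 16 * 2 ≤ 1 - (1 + ε / 4)⁻¹ := by
    field_simp
    nlinarith [mul_pos hε0 hε0, mul_pos (mul_pos hε0 hε0) hε0]
  nlinarith [mul_le_mul_of_nonneg_left hmono (by positivity : (0 : ℝ) ≤ ε / 8)]

theorem sum_exp_sub_one_mul_le (hε : 0 ≤ ε) (hnn : ∀ j ≤ R, 0 ≤ w j)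
    (hdecay : ∀ j ≤ R, w j ≤ exp (-(log 2 + ε) * j)) :
    ∑ i ∈ range R, (exp (ε / 4 * i) - 1) * w (i + 1) ≤
      ε / 8 * (exp (-(log 2 + 3 * ε / 4)) / (1 - exp (-(log 2 + 3 * ε / 4))) ^ 2) := by
  set q := exp (-(log 2 + 3 * ε / 4)) with hq_def
  have hq1 : ‖q‖ < 1 := by
    rw [Real.norm_of_nonneg (exp_pos _).le, exp_lt_one_iff]
    linarith [log_pos one_lt_two]
  have hterm : ∀ i ∈ range R, (exp (ε / 4 * i) - 1) * w (i + 1) ≤ ε / 8 * (i * q ^ i) := by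
    intro i hi
    rw [Finset.mem_range] at hi
    have hw : w (i + 1) ≤ exp (-(log 2 + ε) * i) * (1 / 2) := by
      rw [← exp_neg_log_two]
      calc w (i + 1) ≤ exp (-(log 2 + ε) * i) * exp (-(log 2 + ε)) := by
            rw [← exp_add]; convert hdecay (i + 1) hi using 2; push_cast; ring
        _ ≤ exp (-(log 2 + ε) * i) * exp (-log 2) := by gcongr; linarith
    calc (exp (ε / 4 * i) - 1) * w (i + 1)
        ≤ ε / 4 * i * exp (ε / 4 * i) * (exp (-(log 2 + ε) * i) * (1 / 2)) :=
          mul_le_mul (exp_sub_one_le_mul_exp _) hw (hnn _ hi) (by positivity)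
      _ = ε / 8 * (i * q ^ i) := by
          rw [hq_def, ← exp_nat_mul,
            show (i : ℝ) * -(log 2 + 3 * ε / 4) = ε / 4 * i + -(log 2 + ε) * i by ring, exp_add]
          ring
  calc _ ≤ ∑ i ∈ range R, ε / 8 * (i * q ^ i) := sum_le_sum hterm
    _ = ε / 8 * ∑ i ∈ range R, (i : ℝ) * q ^ i := by rw [mul_sum]
    _ ≤ ε / 8 * (q / (1 - q) ^ 2) := by
        rw [← tsum_coe_mul_geometric_of_norm_lt_one hq1]
        gcongr
        exact (hasSum_coe_mul_geometric_of_norm_lt_one hq1).summable.sum_le_tsum _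
          fun i _ => by positivity

/-- The `j = 0` term gains `1 - e^{-θ} ≈ θ`, while the tail, whose weights decay like `q ^ j` with
`q ≤ 1/2 - ε/4`, loses at most `θ/2 · q/(1-q)²`, which is smaller than `θ` by order `εθ`. -/
theorem sum_exp_mul_sub_one_le (hε0 : 0 < ε) (hε : ε ≤ 1 / 10) (hw0 : w 0 = 1)
    (hnn : ∀ j ≤ R, 0 ≤ w j) (hdecay : ∀ j ≤ R, w j ≤ exp (-(log 2 + ε) * j)) :
    ∑ j ∈ range (R + 1), exp (ε / 4 * (j - 1)) * w j ≤
      (1 - ε ^ 2 / 16) * ∑ j ∈ range (R + 1), w j := by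
  have htail := sum_exp_sub_one_mul_le hε0.le hnn hdecay
  have hnum := mul_div_one_sub_sq_add_le hε0 hε (exp_pos _) (exp_neg_log_two_add_le hε0.le hε)
  have hG := sum_range_le_two hε0.le hdecay
  have hθ := exp_neg_le_inv_one_add (x := ε / 4) (by positivity)
  have hsplit : ∑ i ∈ range R, exp (ε / 4 * i) * w (i + 1) =
      ∑ i ∈ range R, (exp (ε / 4 * i) - 1) * w (i + 1) + ∑ i ∈ range R, w (i + 1) := by
    rw [← sum_add_distrib]
    exact sum_congr rfl fun i _ => by ring
  rw [sum_range_succ', hw0] at hG ⊢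
  rw [sum_range_succ', hw0]
  push_cast
  simp only [add_sub_cancel_right, zero_sub, mul_neg, mul_one, hsplit]
  nlinarith

theorem sum_exp_tilt_le (hε0 : 0 < ε) (hε : ε ≤ 1 / 10) (hR : 1 ≤ R) (hw0 : w 0 = 1)
    (hw1 : 1 / 10 ≤ w 1) (hnn : ∀ j ≤ R, 0 ≤ w j)
    (hdecay : ∀ j ≤ R, w j ≤ exp (-(log 2 + ε) * j)) {t : ℤ} (ht : 0 ≤ t) :
    ∑ j ∈ range (R + 1), exp (ε / 4 * ((if t = 0 then -1 else 1) * (j - t))) * w j ≤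
      (1 - ε ^ 2 / 16) * ∑ j ∈ range (R + 1), w j := by
  split_ifs with h
  · convert sum_exp_neg_mul_le hε0 hε hR hw1 hnn hdecay using 4 with j
    simp only [h, Int.cast_zero]
    ring
  · have ht1 : (1 : ℝ) ≤ t := by exact_mod_cast (by omega : 1 ≤ t)
    refine (sum_le_sum fun j hj => mul_le_mul_of_nonneg_right (exp_le_exp.2 ?_)
      (hnn j (Nat.lt_succ_iff.1 (mem_range.1 hj)))).trans
      (sum_exp_mul_sub_one_le hε0 hε hw0 hnn hdecay)
    nlinarith

end TiltedSums

section MixedVolume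

variable {n d : ℕ}

theorem fiber_inter_mixLattice (A : Set ((Fin n → ℝ) × (Fin d → ℝ))) (z : Fin n → ℤ) :
    {x : Fin d → ℝ | ((fun i => (z i : ℝ)), x) ∈ A ∩ mixLattice n d} =
      {x | ((fun i => (z i : ℝ)), x) ∈ A} :=
  Set.ext fun _ => and_iff_left ⟨z, rfl⟩

theorem depth_le_mixVol_inter {S : Set ((Fin n → ℝ) × (Fin d → ℝ))}
    {a : (Fin n → ℝ) × (Fin d → ℝ)} (ha : a ≠ 0) (y : (Fin n → ℝ) × (Fin d → ℝ)) :
    depth n d S y ≤ mixVol n d (S ∩ {u | dotP n d a y ≤ dotP n d a u}) :=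
  iInf₂_le_of_le a _ (iInf₂_le ha le_rfl)

theorem dotP_zero_snd (a : Fin n → ℝ) (p : (Fin n → ℝ) × (Fin d → ℝ)) :
    dotP n d (a, 0) p = ∑ i, a i * p.1 i := by
  simp [dotP]

/-- Exponential Markov inequality: on the halfspace `exp (θ ⟪a, z - v⟫) ≥ 1`. -/
theorem mixVol_inter_halfspace_le {A : Set ((Fin n → ℝ) × (Fin d → ℝ))} {f : Fin n → ℤ → ℝ≥0∞}
    (hA : ∀ z : Fin n → ℤ,
      volume {x : Fin d → ℝ | ((fun i => (z i : ℝ)), x) ∈ A} = ∏ i, f i (z i))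
    (a v : Fin n → ℝ) {θ : ℝ} (hθ : 0 ≤ θ) :
    mixVol n d (A ∩ {u | ∑ i, a i * v i ≤ dotP n d (a, 0) u}) ≤
      ∏ i, ∑' b : ℤ, ENNReal.ofReal (Real.exp (θ * (a i * (b - v i)))) * f i b := by
  rw [mixVol, ← ENNReal.tsum_pi_fin_prod]
  refine ENNReal.tsum_le_tsum fun z => ?_
  rw [Finset.prod_mul_distrib, ← ENNReal.ofReal_prod_of_nonneg fun _ _ => (Real.exp_pos _).le,
    ← Real.exp_sum, ← hA z]
  by_cases hz : ∑ i, a i * v i ≤ ∑ i, a i * z i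
  · have hexp : 0 ≤ ∑ i, θ * (a i * (z i - v i)) := by
      have h : ∑ i, θ * (a i * (z i - v i)) = θ * (∑ i, a i * z i - ∑ i, a i * v i) := by
        simp only [mul_sub, Finset.sum_sub_distrib, Finset.mul_sum]
      exact h ▸ mul_nonneg hθ (sub_nonneg.2 hz)
    calc _ ≤ volume {x : Fin d → ℝ | ((fun i => (z i : ℝ)), x) ∈ A} :=
          measure_mono fun x hx => hx.1
      _ ≤ _ := le_mul_of_one_le_left zero_le (ENNReal.one_le_ofReal.2 (Real.one_le_exp hexp))
  · have hfib : {x : Fin d → ℝ | ((fun i => (z i : ℝ)), x) ∈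
        A ∩ {u | ∑ i, a i * v i ≤ dotP n d (a, 0) u}} = ∅ :=
      eq_empty_of_forall_notMem fun x hx => hz (by simpa [dotP_zero_snd] using hx.2)
    rw [hfib, measure_empty]
    exact zero_le

end MixedVolume

noncomputable section WedgeBody

def blockLoad (n D k j : ℕ) (u : Fin n → ℝ) : ℝ :=
  if h : j / D < n then u ⟨j / D, h⟩ / (2 * k + 1) else 0

/-- Over the cube `[0, 2k]ⁿ`, the fibre coordinate `x j` ranges over `[0, 1 - u (j / D) / (2k+1)]`
for `j < n D` and over `[0, 1]` otherwise, so the fibre over `u` has volume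
`∏ i, (1 - u i / (2k+1)) ^ D`. -/
def wedgeBody (n d D k : ℕ) : Set ((Fin n → ℝ) × (Fin d → ℝ)) :=
  {p | (∀ i, p.1 i ∈ Icc (0 : ℝ) (2 * k)) ∧
    ∀ j : Fin d, p.2 j ∈ Icc 0 (1 - blockLoad n D k j p.1)}

def wedgeProfile (k D : ℕ) (t : ℝ) : ℝ :=
  (1 - t / (2 * k + 1)) ^ D

def wedgeMass (k D : ℕ) : ℝ → ℝ≥0∞ :=
  (Icc (0 : ℝ) (2 * k)).indicator fun t => ENNReal.ofReal (wedgeProfile k D t)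

variable {n d D k : ℕ}

theorem blockLoad_add_smul (j : ℕ) (u v : Fin n → ℝ) (a b : ℝ) :
    blockLoad n D k j (a • u + b • v) = a * blockLoad n D k j u + b * blockLoad n D k j v := by
  unfold blockLoad
  split_ifs
  · simp only [Pi.add_apply, Pi.smul_apply, smul_eq_mul]; ring
  · ring

theorem blockLoad_nonneg {j : ℕ} {u : Fin n → ℝ} (hu : ∀ i, 0 ≤ u i) :
    0 ≤ blockLoad n D k j u := by
  unfold blockLoad
  split_ifs
  exacts [div_nonneg (hu _) (by positivity), le_rfl]

theorem inv_le_one_sub_blockLoad {j : ℕ} {u : Fin n → ℝ} (hu : ∀ i, u i ≤ 2 * k) :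
    (2 * k + 1 : ℝ)⁻¹ ≤ 1 - blockLoad n D k j u := by
  have hk : (0 : ℝ) < 2 * k + 1 := by positivity
  unfold blockLoad
  split_ifs with h
  · rw [le_sub_comm,
      show (1 : ℝ) - (2 * (k : ℝ) + 1)⁻¹ = 2 * k / (2 * k + 1) by field_simp; ring]
    exact div_le_div_of_nonneg_right (hu _) hk.le
  · simp only [sub_zero]; exact inv_le_one_of_one_le₀ (by linarith)

theorem convex_wedgeBody : Convex ℝ (wedgeBody n d D k) := by
  rintro ⟨u, x⟩ ⟨hu, hx⟩ ⟨v, y⟩ ⟨hv, hy⟩ a b ha hb hab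
  refine ⟨fun i => convex_Icc _ _ (hu i) (hv i) ha hb hab, fun j => ?_⟩
  have hcomb : 1 - blockLoad n D k j (a • u + b • v) =
      a * (1 - blockLoad n D k j u) + b * (1 - blockLoad n D k j v) := by
    rw [blockLoad_add_smul]; linear_combination -hab
  simp only [Prod.smul_mk, Prod.mk_add_mk, Pi.add_apply, Pi.smul_apply, smul_eq_mul, hcomb]
  exact ⟨by nlinarith [(hx j).1, (hy j).1],
    add_le_add (mul_le_mul_of_nonneg_left (hx j).2 ha) (mul_le_mul_of_nonneg_left (hy j).2 hb)⟩

@[fun_prop]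
theorem continuous_blockLoad (j : ℕ) : Continuous (blockLoad n D k j) := by
  unfold blockLoad
  split_ifs
  exacts [(continuous_apply _).div_const _, continuous_const]

theorem isCompact_wedgeBody : IsCompact (wedgeBody n d D k) := by
  have hclosed : IsClosed (wedgeBody n d D k) := by
    simp only [wedgeBody, mem_Icc, Set.ofPred_and, Set.ofPred_forall]
    refine .inter (isClosed_iInter fun i => .inter ?_ ?_)
      (isClosed_iInter fun j => .inter ?_ ?_) <;> exact isClosed_le (by fun_prop) (by fun_prop)
  refine (isCompact_univ_pi fun _ => isCompact_Icc (a := (0 : ℝ)) (b := 2 * k)).prod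
    (isCompact_univ_pi fun _ => isCompact_Icc (a := (0 : ℝ)) (b := 1))
    |>.of_isClosed_subset hclosed ?_
  rintro ⟨u, x⟩ ⟨hu, hx⟩
  exact ⟨fun i _ => hu i, fun j _ => ⟨(hx j).1, (hx j).2.trans
    (sub_le_self _ (blockLoad_nonneg fun i => (hu i).1))⟩⟩

theorem interior_wedgeBody_nonempty (hk : 0 < k) : (interior (wedgeBody n d D k)).Nonempty := by
  set U : Set ((Fin n → ℝ) × (Fin d → ℝ)) :=
    (univ.pi fun _ => Ioo 0 (2 * (k : ℝ))) ×ˢ (univ.pi fun _ => Ioo 0 (2 * (k : ℝ) + 1)⁻¹)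
  have hopen : IsOpen U := (isOpen_set_pi finite_univ fun _ _ => isOpen_Ioo).prod
    (isOpen_set_pi finite_univ fun _ _ => isOpen_Ioo)
  have hsub : U ⊆ wedgeBody n d D k := by
    rintro ⟨u, x⟩ ⟨hu, hx⟩
    exact ⟨fun i => Ioo_subset_Icc_self (hu i trivial), fun j => ⟨(hx j trivial).1.le,
      (hx j trivial).2.le.trans (inv_le_one_sub_blockLoad fun i => (hu i trivial).2.le)⟩⟩
  have hne : U.Nonempty :=
    (univ_pi_nonempty_iff.2 fun _ => nonempty_Ioo.2 (by positivity)).prod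
      (univ_pi_nonempty_iff.2 fun _ => nonempty_Ioo.2 (by positivity))
  exact hne.mono (interior_maximal hsub hopen)

theorem closedBall_subset_fst_image_wedgeBody :
    Metric.closedBall (fun _ => (k : ℝ)) k ⊆ Prod.fst '' wedgeBody n d D k := by
  intro u hu
  rw [closedBall_pi _ (by positivity)] at hu
  have hu' : ∀ i, u i ∈ Icc (0 : ℝ) (2 * k) := fun i => by
    simpa [Real.closedBall_eq_Icc, two_mul] using hu i trivial
  refine ⟨(u, 0), ⟨hu', fun j => ⟨le_rfl, ?_⟩⟩, rfl⟩
  exact (inv_nonneg.2 (by positivity)).trans (inv_le_one_sub_blockLoad fun i => (hu' i).2)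

theorem volume_fiber_wedgeBody (hD : 0 < D) (hnD : n * D ≤ d) (u : Fin n → ℝ) :
    volume {x : Fin d → ℝ | (u, x) ∈ wedgeBody n d D k} = ∏ i, wedgeMass k D (u i) := by
  by_cases hu : ∀ i, u i ∈ Icc (0 : ℝ) (2 * k)
  · have hfib : {x : Fin d → ℝ | (u, x) ∈ wedgeBody n d D k} =
        univ.pi fun j : Fin d => Icc 0 (1 - blockLoad n D k j u) := by
      ext x
      exact ⟨fun h j _ => h.2 j, fun h => ⟨hu, fun j => h j trivial⟩⟩
    have hk : (0 : ℝ) < 2 * k + 1 := by positivity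
    have hbase : ∀ i, 0 ≤ 1 - u i / (2 * k + 1) := fun i => by
      rw [sub_nonneg, div_le_one hk]; linarith [(hu i).2]
    simp only [hfib, volume_pi_pi, Real.volume_Icc, sub_zero, wedgeMass,
      indicator_of_mem (hu _), wedgeProfile, ENNReal.ofReal_pow (hbase _)]
    rw [← Fin.prod_univ_dite_div hD hnD]
    refine Finset.prod_congr rfl fun j _ => ?_
    unfold blockLoad
    split_ifs <;> simp
  · obtain ⟨i, hi⟩ := not_forall.1 hu
    have hfib : {x : Fin d → ℝ | (u, x) ∈ wedgeBody n d D k} = ∅ :=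
      eq_empty_of_forall_notMem fun x hx => hi (hx.1 i)
    rw [hfib, measure_empty]
    exact (Finset.prod_eq_zero (Finset.mem_univ i) (indicator_of_notMem hi _)).symm

end WedgeBody

section WedgeProfile

open Real

variable {k D : ℕ}

theorem wedgeProfile_zero : wedgeProfile k D 0 = 1 := by
  simp [wedgeProfile]

theorem wedgeProfile_nonneg {t : ℝ} (ht : t ≤ 2 * k + 1) : 0 ≤ wedgeProfile k D t :=
  pow_nonneg (sub_nonneg.2 ((div_le_one (by positivity)).2 ht)) D

theorem wedgeProfile_le_exp {ε t : ℝ} (hrate : (log 2 + ε) * (2 * k + 1) ≤ D) (ht0 : 0 ≤ t)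
    (ht : t ≤ 2 * k + 1) : wedgeProfile k D t ≤ exp (-(log 2 + ε) * t) := by
  have hk : (0 : ℝ) < 2 * k + 1 := by positivity
  calc wedgeProfile k D t ≤ exp (-(t / (2 * k + 1))) ^ D :=
        pow_le_pow_left₀ (sub_nonneg.2 ((div_le_one hk).2 ht))
          (by linarith [add_one_le_exp (-(t / (2 * k + 1)))]) D
    _ = exp (D * -(t / (2 * k + 1))) := (exp_nat_mul _ D).symm
    _ ≤ exp (-(log 2 + ε) * t) := by
        refine exp_le_exp.2 ?_
        rw [mul_neg, neg_mul, neg_le_neg_iff, mul_div_assoc', le_div_iff₀ hk]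
        nlinarith

theorem one_div_ten_le_wedgeProfile_one (hk : 0 < k) (hD : D ≤ 3 * k) :
    1 / 10 ≤ wedgeProfile k D 1 := by
  have hk' : (0 : ℝ) < 2 * k := by positivity
  have hbase : exp (-(2 * k : ℝ)⁻¹) ≤ 1 - 1 / (2 * k + 1) := by
    convert exp_neg_le_inv_one_add (inv_nonneg.2 hk'.le) using 1
    field_simp
    ring
  have hexp : exp (-(3 / 2)) ≤ exp (-(2 * k : ℝ)⁻¹) ^ D := by
    rw [← exp_nat_mul]
    refine exp_le_exp.2 ?_
    rw [mul_neg, neg_le_neg_iff, ← div_eq_mul_inv, div_le_iff₀ hk']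
    have : (D : ℝ) ≤ 3 * k := by exact_mod_cast hD
    linarith
  have hnum : 1 / 10 ≤ exp (-(3 / 2)) := by
    have h3 : exp (3 / 2) ^ 2 = exp 1 ^ 3 := by rw [← exp_nat_mul, ← exp_nat_mul]; norm_num
    have h27 : exp 1 ^ 3 < 3 ^ 3 := pow_lt_pow_left₀ exp_one_lt_three (exp_pos 1).le (by norm_num)
    have h10 : exp (3 / 2) ≤ 10 := by nlinarith [exp_pos (3 / 2)]
    rw [exp_neg, one_div]
    exact inv_anti₀ (exp_pos _) h10
  exact hnum.trans (hexp.trans (pow_le_pow_left₀ (exp_pos _).le hbase D))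

end WedgeProfile

section DepthBound

open Finset Real

variable {n d D k : ℕ}

theorem tsum_ofReal_mul_wedgeMass (g : ℤ → ℝ) (hg : ∀ b, 0 ≤ g b) :
    ∑' b : ℤ, ENNReal.ofReal (g b) * wedgeMass k D b =
      ENNReal.ofReal (∑ j ∈ range (2 * k + 1), g j * wedgeProfile k D j) := by
  rw [tsum_int_eq_sum_range (N := 2 * k), ENNReal.ofReal_sum_of_nonneg]
  · refine sum_congr rfl fun j hj => ?_
    have hj' : ((j : ℤ) : ℝ) ∈ Icc (0 : ℝ) (2 * k) := by
      simpa using (Nat.cast_le (α := ℝ)).2 (Nat.lt_succ_iff.1 (mem_range.1 hj))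
    rw [wedgeMass, indicator_of_mem hj', ENNReal.ofReal_mul (hg _), Int.cast_natCast]
  · exact fun j hj => mul_nonneg (hg _)
      (wedgeProfile_nonneg (by simpa using (Nat.cast_le (α := ℝ)).2 (mem_range.1 hj).le))
  · intro b hb
    have hb' := mem_of_indicator_ne_zero (right_ne_zero_of_mul hb)
    exact ⟨by exact_mod_cast hb'.1, by exact_mod_cast hb'.2⟩

theorem volume_fiber_wedgeBody_inter_mixLattice (hD : 0 < D) (hnD : n * D ≤ d)
    (z : Fin n → ℤ) :
    volume {x : Fin d → ℝ | ((fun i => (z i : ℝ)), x) ∈ wedgeBody n d D k ∩ mixLattice n d} =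
      ∏ i, wedgeMass k D (z i) := by
  rw [fiber_inter_mixLattice, volume_fiber_wedgeBody hD hnD]

theorem mixVol_wedgeBody (hD : 0 < D) (hnD : n * D ≤ d) :
    mixVol n d (wedgeBody n d D k ∩ mixLattice n d) =
      ENNReal.ofReal (∑ j ∈ range (2 * k + 1), wedgeProfile k D j) ^ n := by
  have h := tsum_ofReal_mul_wedgeMass (k := k) (D := D) (fun _ => 1) fun _ => zero_le_one
  simp only [ENNReal.ofReal_one, one_mul] at h
  rw [mixVol, tsum_congr (volume_fiber_wedgeBody_inter_mixLattice hD hnD),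
    ENNReal.tsum_pi_fin_prod fun _ (b : ℤ) => wedgeMass k D b, h, prod_const, card_univ,
    Fintype.card_fin]

theorem sum_exp_tilt_wedgeProfile_le (hk : 0 < k) {ε : ℝ} (hε0 : 0 < ε) (hε : ε ≤ 1 / 10)
    (hrate : (log 2 + ε) * (2 * k + 1) ≤ D) (hD3k : D ≤ 3 * k) {t : ℤ} (ht : 0 ≤ t) :
    ∑ j ∈ range (2 * k + 1), exp (ε / 4 * ((if t = 0 then -1 else 1) * (j - t))) *
        wedgeProfile k D j ≤
      (1 - ε ^ 2 / 16) * ∑ j ∈ range (2 * k + 1), wedgeProfile k D j :=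
  sum_exp_tilt_le (w := fun j => wedgeProfile k D j) hε0 hε (by omega)
    (by rw [Nat.cast_zero]; exact wedgeProfile_zero)
    (by rw [Nat.cast_one]; exact one_div_ten_le_wedgeProfile_one hk hD3k)
    (fun j hj => wedgeProfile_nonneg (by exact_mod_cast (by omega : j ≤ 2 * k + 1)))
    (fun j hj => wedgeProfile_le_exp hrate j.cast_nonneg
      (by exact_mod_cast (by omega : j ≤ 2 * k + 1))) ht

theorem depth_wedgeBody_le (hk : 0 < k) (hn : 0 < n) (hD : 0 < D) (hnD : n * D ≤ d) {ε : ℝ}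
    (hε0 : 0 < ε) (hε : ε ≤ 1 / 10) (hrate : (log 2 + ε) * (2 * k + 1) ≤ D) (hD3k : D ≤ 3 * k)
    {y : (Fin n → ℝ) × (Fin d → ℝ)} (hy : y ∈ wedgeBody n d D k ∩ mixLattice n d) :
    depth n d (wedgeBody n d D k ∩ mixLattice n d) y ≤
      ENNReal.ofReal ((1 - ε ^ 2 / 16) ^ n) *
        mixVol n d (wedgeBody n d D k ∩ mixLattice n d) := by
  obtain ⟨⟨hyu, -⟩, z₀, hz₀⟩ := hy
  have hz₀nn : ∀ i, 0 ≤ z₀ i := fun i => by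
    have h : (0 : ℝ) ≤ z₀ i := by simpa [hz₀] using (hyu i).1
    exact_mod_cast h
  set σ : Fin n → ℝ := fun i => if z₀ i = 0 then -1 else 1
  have hσ : ((σ, 0) : (Fin n → ℝ) × (Fin d → ℝ)) ≠ 0 := fun h => by
    have h0 := congr_fun (congr_arg Prod.fst h) ⟨0, hn⟩
    simp only [σ, Prod.fst_zero, Pi.zero_apply] at h0
    split_ifs at h0 <;> norm_num at h0
  have hδ : 0 ≤ 1 - ε ^ 2 / 16 := by nlinarith
  calc depth n d (wedgeBody n d D k ∩ mixLattice n d) y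
      ≤ mixVol n d (wedgeBody n d D k ∩ mixLattice n d ∩
          {u | dotP n d (σ, 0) y ≤ dotP n d (σ, 0) u}) := depth_le_mixVol_inter hσ y
    _ ≤ ∏ i, ∑' b : ℤ, ENNReal.ofReal (exp (ε / 4 * (σ i * (b - z₀ i)))) * wedgeMass k D b := by
        simp only [dotP_zero_snd σ y, hz₀]
        exact mixVol_inter_halfspace_le (volume_fiber_wedgeBody_inter_mixLattice hD hnD) σ _
          (by positivity)
    _ ≤ ∏ _i : Fin n, ENNReal.ofReal
          ((1 - ε ^ 2 / 16) * ∑ j ∈ range (2 * k + 1), wedgeProfile k D j) := by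
        refine prod_le_prod' fun i _ => ?_
        rw [tsum_ofReal_mul_wedgeMass _ fun _ => (exp_pos _).le]
        exact ENNReal.ofReal_le_ofReal (by
          simpa only [Int.cast_natCast] using
            sum_exp_tilt_wedgeProfile_le hk hε0 hε hrate hD3k (hz₀nn i))
    _ = _ := by
        rw [prod_const, card_univ, Fintype.card_fin, mixVol_wedgeBody hD hnD,
          ENNReal.ofReal_mul hδ, mul_pow, ENNReal.ofReal_pow hδ]

end DepthBound

open Real in
theorem exists_wedge_parameters {α ε : ℝ} (hε0 : 0 < ε) (hε : ε ≤ 1 / 10)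
    (hεα : log 2 + 2 * ε ≤ α) {k m : ℕ} (hk : 2 ≤ k) (hm : 2 * (1 + α * k) ≤ (m : ℝ)) :
    ∃ n d D : ℕ, 1 ≤ n ∧ 1 ≤ d ∧ n + d = m ∧ 0 < D ∧ n * D ≤ d ∧
      (log 2 + ε) * (2 * k + 1) ≤ D ∧ D ≤ 3 * k ∧ (m : ℝ) ≤ 7 * k * n := by
  have hlog := log_two_lt_d9
  have hk' : (2 : ℝ) ≤ k := by exact_mod_cast hk
  set D := ⌈(log 2 + ε) * (2 * k + 1)⌉₊
  have hDlt : (D : ℝ) < (log 2 + ε) * (2 * k + 1) + 1 :=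
    Nat.ceil_lt_add_one (by positivity [log_pos one_lt_two])
  have hD0 : 0 < D := Nat.ceil_pos.2 (by positivity [log_pos one_lt_two])
  have hDm : D + 1 ≤ m := by
    have : (D : ℝ) < m := by nlinarith
    exact_mod_cast this
  have hD3k : D ≤ 3 * k := by
    have : (D : ℝ) < 3 * k := by nlinarith
    exact_mod_cast this.le
  set n := m / (D + 1)
  have hn : 1 ≤ n := (Nat.one_le_div_iff (by omega)).2 hDm
  have hnm : n * D + n ≤ m := by simpa [mul_add] using Nat.div_mul_le_self m (D + 1)
  have hnD : 1 ≤ n * D := Nat.one_le_iff_ne_zero.2 (by positivity)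
  have hmn : m ≤ 7 * k * n := by
    have h1 : (D + 1) * n + m % (D + 1) = m := Nat.div_add_mod m (D + 1)
    have h2 : m % (D + 1) ≤ D := Nat.lt_succ_iff.1 (Nat.mod_lt m D.succ_pos)
    nlinarith [Nat.mul_le_mul_right n hD3k, Nat.mul_le_mul_left (3 * k) hn,
      Nat.mul_le_mul_right n (by omega : 1 ≤ k)]
  exact ⟨n, m - n, D, hn, by omega, by omega, hD0, by omega, Nat.le_ceil _, hD3k,
    by exact_mod_cast hmn⟩

/-- Necessity of a linear ℓ∞ radius: for any `α > log 2` there are `γ, M > 0` such that for all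
`k ≥ 2` and `m ≥ 2(1 + αk)` one can split `m = n + d` and find a convex body whose projection
contains a translate of `k·B∞ⁿ` yet every point of `S` has depth at most
`M·exp(−γ·m/k)·H_d(S)`.  (`Fin n → ℝ` carries the sup norm, so `Metric.closedBall z₀ k` is the
translate `z₀ + k·B∞ⁿ`.) -/
theorem linear_threshold_necessity (α : ℝ) (hα : Real.log 2 < α) :
    ∃ γ M : ℝ, 0 < γ ∧ 0 < M ∧
      ∀ k : ℕ, 2 ≤ k → ∀ m : ℕ, 2 * (1 + α * k) ≤ (m : ℝ) →
        ∃ n d : ℕ, 1 ≤ n ∧ 1 ≤ d ∧ n + d = m ∧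
          ∃ C : Set ((Fin n → ℝ) × (Fin d → ℝ)),
            Convex ℝ C ∧ IsCompact C ∧ (interior C).Nonempty ∧
            (∃ z₀ : Fin n → ℝ, Metric.closedBall z₀ (k : ℝ) ⊆ Prod.fst '' C) ∧
            ∀ y ∈ C ∩ mixLattice n d,
              depth n d (C ∩ mixLattice n d) y ≤
                ENNReal.ofReal (M * Real.exp (-γ * m / k)) *
                  mixVol n d (C ∩ mixLattice n d) := by
  obtain ⟨ε, hε0, hε, hεα⟩ : ∃ ε : ℝ, 0 < ε ∧ ε ≤ 1 / 10 ∧ Real.log 2 + 2 * ε ≤ α :=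
    ⟨min (1 / 10) ((α - Real.log 2) / 2), lt_min (by norm_num) (by linarith), min_le_left _ _,
      by linarith [min_le_right (1 / 10 : ℝ) ((α - Real.log 2) / 2)]⟩
  refine ⟨ε ^ 2 / 112, 1, by positivity, one_pos, fun k hk m hm => ?_⟩
  obtain ⟨n, d, D, hn, hd, hnd, hD, hnD, hrate, hD3k, hmn⟩ :=
    exists_wedge_parameters hε0 hε hεα hk hm
  refine ⟨n, d, hn, hd, hnd, wedgeBody n d D k, convex_wedgeBody, isCompact_wedgeBody,
    interior_wedgeBody_nonempty (by omega), ⟨_, closedBall_subset_fst_image_wedgeBody⟩,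
    fun y hy => (depth_wedgeBody_le (by omega) hn hD hnD hε0 hε hrate hD3k hy).trans ?_⟩
  gcongr
  have hk : (0 : ℝ) < k := by positivity
  calc (1 - ε ^ 2 / 16) ^ n ≤ Real.exp (-(ε ^ 2 / 16)) ^ n :=
        pow_le_pow_left₀ (by nlinarith) (Real.one_sub_le_exp_neg _) n
    _ = Real.exp (-(ε ^ 2 / 16) * n) := by rw [← Real.exp_nat_mul, mul_comm]
    _ ≤ 1 * Real.exp (-(ε ^ 2 / 112) * m / k) := by
        rw [one_mul, Real.exp_le_exp, le_div_iff₀ hk]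
        nlinarith [sq_nonneg ε]
end
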